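/- arXiv:2105.13872 — 2 statements merged into one kernel-verified Lean document; each statement's English description precedes it below -/
import Mathlib

section
/- Let f : U → ℝ^n be a C^l curve on an open interval U ⊆ ℝ (with l ≥ n) that is l-nondegenerate at x₀ ∈ U, meaning the derivatives f'(x₀), f''(x₀), …, f^{(l)}(x₀) span ℝ^n. Then there exists an open interval B₀ ⊆ U centered at x₀ and a countable set S ⊆ B₀ such that for every x ∈ B₀ \ S the derivatives f'(x), …, f^{(n)}(x) span ℝ^n (i.e., f is n-nondegenerate at every point of B₀ \ S). -/
/-!
Write `D i` for the `i`-th derivative of `f`. Spanning is an open condition, so on a small interval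
`B₀` around `x₀` the vectors `D 1, …, D l` span everywhere. At a point `x ∈ B₀` where `D 1, …, D n`
do not span, let `p < n` be the first index with `D (p+1) x ∈ W := span (D 1 x, …, D p x)`, and let
`k ≥ p + 1` be such that `D (p+1) x, …, D k x ∈ W` but `D (k+1) x ∉ W`. For a suitable set `c`
of `p + 1` coordinates, the minor `ψ` of the rows `D 1, …, D p, D k` in the columns `c` vanishes
at `x`, while `ψ' x` is the minor of `D 1 x, …, D p x, D (k+1) x`, which is nonzero. Hence `x` is
an isolated zero of `ψ`; as `ψ` runs over countably many functions indexed by `(p, k, c)`, the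
bad points form a countable set.
-/

open Set Submodule Module Topology Matrix

theorem countable_setOf_eq_zero_and_hasDerivAt_ne_zero {F : Type*} [NormedAddCommGroup F]
    [NormedSpace ℝ F] (ψ : ℝ → F) : {x | ψ x = 0 ∧ ∃ d ≠ 0, HasDerivAt ψ d x}.Countable := by
  refine (HereditarilyLindelofSpace.isLindelof _).countable_of_isDiscrete <|
    IsDiscrete.of_nhdsWithin fun x ⟨_, d, hd, hψ⟩ => Filter.le_pure_iff.2 ?_
  have hne := eventually_nhdsWithin_iff.1 (hψ.eventually_ne (c := 0) hd)
  refine eventually_nhdsWithin_iff.2 ?_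
  filter_upwards [hne] with y hy hyZ
  by_contra hyx
  exact hy hyx hyZ.1

theorem hasDerivAt_det_of_rows {𝕜 ι : Type*} [NontriviallyNormedField 𝕜] [Fintype ι]
    [DecidableEq ι] {A : ι → 𝕜 → ι → 𝕜} {A' : ι → ι → 𝕜} {x : 𝕜}
    (h : ∀ r, HasDerivAt (A r) (A' r) x) :
    HasDerivAt (fun y => (Matrix.of fun r => A r y).det)
      (∑ r, ((Matrix.of fun r => A r x).updateRow r (A' r)).det) x := by
  let detCML : ContinuousMultilinearMap 𝕜 (fun _ : ι => ι → 𝕜) 𝕜 :=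
    { (detRowAlternating : (ι → 𝕜) [⋀^ι]→ₗ[𝕜] 𝕜).toMultilinearMap with
      cont := continuous_id.matrix_det }
  refine (HasFDerivAt.multilinear_comp detCML fun r => (h r).hasFDerivAt).hasDerivAt
    |>.congr_deriv ?_
  simp only [_root_.sum_apply, ContinuousLinearMap.comp_apply,
    ContinuousLinearMap.toSpanSingleton_apply, one_smul,
    ContinuousMultilinearMap.toContinuousLinearMap_apply, updateRow, detCML]
  rfl

theorem det_of_cols_eq_zero_of_not_linearIndependent {K ι κ : Type*} [Field K] [Fintype ι]
    [DecidableEq ι] {w : ι → κ → K} (hw : ¬ LinearIndependent K w) (c : ι → κ) :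
    (Matrix.of fun r j => w r (c j)).det = 0 :=
  det_eq_zero_of_not_linearIndependent_rows fun hli =>
    hw (LinearIndependent.of_comp (LinearMap.funLeft K K c) hli)

theorem exists_linearIndependent_comp_fin {K V ι : Type*} [DivisionRing K] [AddCommGroup V]
    [Module K V] [FiniteDimensional K V] {m : ℕ} (hm : finrank K V = m) {v : ι → V}
    (hv : span K (range v) = ⊤) : ∃ c : Fin m → ι, LinearIndependent K (v ∘ c) := by
  let b := Basis.ofSpan hv.ge
  let e := b.indexEquiv (finBasisOfFinrankEq K V hm)
  choose c hc using fun i : Fin m => Basis.ofSpan_subset hv.ge (mem_range_self (e.symm i))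
  refine ⟨c, ?_⟩
  rw [show v ∘ c = b ∘ e.symm from funext hc]
  exact b.linearIndependent.comp _ e.symm.injective

theorem exists_det_of_cols_ne_zero {K : Type*} [Field K] {m n : ℕ} {w : Fin m → Fin n → K}
    (hw : LinearIndependent K w) :
    ∃ c : Fin m → Fin n, (Matrix.of fun r j => w r (c j)).det ≠ 0 := by
  have hcols : span K (range (Matrix.of w).col) = ⊤ := by
    refine eq_top_of_finrank_eq ?_
    rw [← rank_eq_finrank_span_cols, LinearIndependent.rank_matrix (M := Matrix.of w) hw]
    simp
  obtain ⟨c, hc⟩ := exists_linearIndependent_comp_fin (m := m) (by simp) hcols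
  refine ⟨c, ?_⟩
  rw [← isUnit_iff_ne_zero, ← isUnit_iff_isUnit_det, ← linearIndependent_cols_iff_isUnit]
  exact hc

theorem not_linearIndependent_of_forall_mem {K V ι : Type*} [DivisionRing K] [AddCommGroup V]
    [Module K V] [Fintype ι] {w : ι → V} {W : Submodule K V} [FiniteDimensional K W]
    (hW : finrank K W < Fintype.card ι) (hw : ∀ i, w i ∈ W) : ¬ LinearIndependent K w := by
  intro hli
  have := Submodule.finrank_mono (span_le.2 (range_subset_iff.2 hw))
  rw [finrank_span_eq_card hli] at this
  omega

theorem exists_linearIndependent_and_mem_span {K V : Type*} [DivisionRing K] [AddCommGroup V]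
    [Module K V] {v : ℕ → V} {n : ℕ} (h : ¬ LinearIndependent K fun i : Fin n => v i) :
    ∃ p < n, LinearIndependent K (fun i : Fin p => v i) ∧
      v p ∈ span K (range fun i : Fin p => v i) := by
  classical
  have hex : ∃ q, ¬ LinearIndependent K fun i : Fin q => v i := ⟨n, h⟩
  obtain ⟨p, hp⟩ : ∃ p, Nat.find hex = p + 1 := by
    refine Nat.exists_eq_add_one.2 (Nat.pos_of_ne_zero fun h0 => ?_)
    have := Nat.find_spec hex
    rw [h0] at this
    exact this linearIndependent_empty_type
  have hind : LinearIndependent K fun i : Fin p => v i := not_not.1 (Nat.find_min hex (by omega))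
  have hdep := Nat.find_spec hex
  rw [hp, linearIndependent_finSucc'] at hdep
  exact ⟨p, by have := Nat.find_min' hex h; omega, hind, not_not.1 fun hv => hdep ⟨hind, hv⟩⟩

theorem Nat.exists_le_and_succ_lt_and_not_succ {P : ℕ → Prop} {p N : ℕ} (hp : ∀ i ≤ p, P i)
    (hN : ∃ j < N, ¬ P j) : ∃ k, p ≤ k ∧ k + 1 < N ∧ P k ∧ ¬ P (k + 1) := by
  classical
  have hex : ∃ j, ¬ P j := hN.imp fun _ => And.right
  obtain ⟨j, hjN, hj⟩ := hN
  have hfind : p < Nat.find hex := not_le.1 fun hle => Nat.find_spec hex (hp _ hle)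
  refine ⟨Nat.find hex - 1, by omega, by have := Nat.find_min' hex hj; omega,
    not_not.1 (Nat.find_min hex (by omega)), ?_⟩
  rw [Nat.sub_add_cancel (by omega)]
  exact Nat.find_spec hex

theorem exists_pivot {K V : Type*} [DivisionRing K] [AddCommGroup V] [Module K V]
    [FiniteDimensional K V] {v : ℕ → V} {n N : ℕ} (hV : finrank K V = n)
    (hN : span K (range fun i : Fin N => v i) = ⊤)
    (hn : span K (range fun i : Fin n => v i) ≠ ⊤) :
    ∃ p k, p ≤ k ∧ k + 1 < N ∧ LinearIndependent K (fun i : Fin p => v i) ∧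
      (∀ i ≤ p, v i ∈ span K (range fun i : Fin p => v i)) ∧
      v k ∈ span K (range fun i : Fin p => v i) ∧
      v (k + 1) ∉ span K (range fun i : Fin p => v i) := by
  have hdep : ¬ LinearIndependent K fun i : Fin n => v i := fun hli =>
    hn (eq_top_of_finrank_eq (by rw [finrank_span_eq_card hli, hV, Fintype.card_fin]))
  obtain ⟨p, hpn, hind, hvp⟩ := exists_linearIndependent_and_mem_span hdep
  set W := span K (range fun i : Fin p => v i)
  have hle : ∀ i ≤ p, v i ∈ W := fun i hi =>
    hi.lt_or_eq.elim (fun hlt => subset_span ⟨⟨i, hlt⟩, rfl⟩) fun heq => heq ▸ hvp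
  have hW : W ≠ ⊤ := fun htop => by
    have : finrank K W = p := by simpa using finrank_span_eq_card hind
    rw [htop, finrank_top, hV] at this
    omega
  have hNW : ∃ j < N, v j ∉ W := by
    by_contra! h
    exact hW (eq_top_iff.2 (hN ▸ span_le.2 (range_subset_iff.2 fun i => h i i.2)))
  obtain ⟨k, hpk, hkN, hk, hk1⟩ := Nat.exists_le_and_succ_lt_and_not_succ hle hNW
  exact ⟨p, k, hpk, hkN, hind, hle, hk, hk1⟩

section Wronskian

variable {n m N : ℕ} {u : ℕ → ℝ → Fin n → ℝ} {x : ℝ}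

/-- For `u k = f^(k+1)`, `κ = Fin.val` and `c = id` this is the Wronskian `φ` of `f`; in general it
is a minor of the matrix with rows `u k x`. -/
noncomputable def wronskianMinor (u : ℕ → ℝ → Fin n → ℝ) (κ : Fin m → ℕ) (c : Fin m → Fin n)
    (x : ℝ) : ℝ :=
  (Matrix.of fun r j => u (κ r) x (c j)).det

theorem hasDerivAt_wronskianMinor {κ : Fin m → ℕ} (c : Fin m → Fin n)
    (hu : ∀ r, HasDerivAt (u (κ r)) (u (κ r + 1) x) x) :
    HasDerivAt (wronskianMinor u κ c)
      (∑ r, wronskianMinor u (Function.update κ r (κ r + 1)) c x) x := by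
  refine (hasDerivAt_det_of_rows (A' := fun r j => u (κ r + 1) x (c j))
    fun r => hasDerivAt_pi.2 fun j => hasDerivAt_pi.1 (hu r) (c j)).congr_deriv ?_
  refine Finset.sum_congr rfl fun r _ => congrArg det ?_
  ext r' j
  by_cases h : r' = r
  · subst h; simp
  · simp [updateRow_ne h, Function.update_of_ne h]

theorem wronskianMinor_eq_zero_of_forall_mem {κ : Fin m → ℕ} {W : Submodule ℝ (Fin n → ℝ)}
    (hW : finrank ℝ W < m) (hκ : ∀ r, u (κ r) x ∈ W) (c : Fin m → Fin n) :
    wronskianMinor u κ c x = 0 :=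
  det_of_cols_eq_zero_of_not_linearIndependent
    (not_linearIndependent_of_forall_mem (by simpa using hW) hκ) c

theorem exists_wronskianMinor_eq_zero_and_hasDerivAt_ne_zero
    (hu : ∀ k, k + 1 < N → HasDerivAt (u k) (u (k + 1) x) x)
    (hN : span ℝ (range fun i : Fin N => u i x) = ⊤)
    (hn : span ℝ (range fun i : Fin n => u i x) ≠ ⊤) :
    ∃ p k, ∃ c : Fin (p + 1) → Fin n,
      wronskianMinor u (Fin.snoc (fun i : Fin p => (i : ℕ)) k) c x = 0 ∧
      ∃ d ≠ 0, HasDerivAt (wronskianMinor u (Fin.snoc (fun i : Fin p => (i : ℕ)) k) c) d x := by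
  obtain ⟨p, k, hpk, hkN, hind, hle, hk, hk1⟩ :=
    exists_pivot (v := fun j => u j x) (finrank_fin_fun ℝ) hN hn
  set κ : Fin (p + 1) → ℕ := Fin.snoc (fun i : Fin p => (i : ℕ)) k
  have hW : finrank ℝ (span ℝ (range fun i : Fin p => u i x)) < p + 1 := by
    rw [finrank_span_eq_card hind, Fintype.card_fin]; omega
  have hκW : ∀ r, u (κ r) x ∈ span ℝ (range fun i : Fin p => u i x) :=
    Fin.lastCases (by simpa [κ]) fun i => by simpa [κ] using hle i i.2.le
  have hκN : ∀ r, κ r + 1 < N :=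
    Fin.lastCases (by simpa [κ]) fun i => by simp only [Fin.snoc_castSucc, κ]; omega
  have hlast : LinearIndependent ℝ fun r => u (Function.update κ (Fin.last p) (k + 1) r) x := by
    rw [Fin.update_snoc_last, ← Function.comp_def (fun j => u j x), Fin.comp_snoc]
    exact linearIndependent_finSnoc.2 ⟨hind, hk1⟩
  obtain ⟨c, hc⟩ := exists_det_of_cols_ne_zero hlast
  -- Differentiating one of the rows `u 0, …, u (p-1)` produces a row among `u 1, …, u p`, all in
  -- the `p`-dimensional span, so only the derivative of the last row contributes.
  refine ⟨p, k, c, wronskianMinor_eq_zero_of_forall_mem hW hκW c, _, ?_,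
    hasDerivAt_wronskianMinor c fun r => hu _ (hκN r)⟩
  rw [Fin.sum_univ_castSucc, Finset.sum_eq_zero fun i _ => ?_, zero_add]
  · simpa [κ, wronskianMinor] using hc
  refine wronskianMinor_eq_zero_of_forall_mem hW (fun r => ?_) c
  rw [Function.update_apply]
  split_ifs
  · simpa [κ] using hle _ i.2
  · exact hκW r

theorem countable_setOf_span_ne_top {B : Set ℝ}
    (hu : ∀ k, k + 1 < N → ∀ x ∈ B, HasDerivAt (u k) (u (k + 1) x) x) :
    {x ∈ B | span ℝ (range fun i : Fin N => u i x) = ⊤ ∧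
      span ℝ (range fun i : Fin n => u i x) ≠ ⊤}.Countable := by
  refine (countable_iUnion fun p => countable_iUnion fun k => countable_iUnion fun c =>
    countable_setOf_eq_zero_and_hasDerivAt_ne_zero
      (wronskianMinor u (Fin.snoc (fun i : Fin p => (i : ℕ)) k) c)).mono ?_
  rintro x ⟨hxB, hN, hn⟩
  simp only [mem_iUnion]
  exact exists_wronskianMinor_eq_zero_and_hasDerivAt_ne_zero (fun k hk => hu k hk x hxB) hN hn

end Wronskian

theorem ContDiffOn.hasDerivAt_iteratedDerivWithin {𝕜 F : Type*} [NontriviallyNormedField 𝕜]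
    [NormedAddCommGroup F] [NormedSpace 𝕜 F] {f : 𝕜 → F} {s : Set 𝕜} {l : WithTop ℕ∞} {k : ℕ}
    {x : 𝕜} (hf : ContDiffOn 𝕜 l f s) (hs : IsOpen s) (hk : k < l) (hx : x ∈ s) :
    HasDerivAt (iteratedDerivWithin k f s) (iteratedDerivWithin (k + 1) f s x) x := by
  rw [iteratedDerivWithin_succ, derivWithin_of_isOpen hs hx]
  exact ((hf.differentiableOn_iteratedDerivWithin hk hs.uniqueDiffOn x hx).differentiableAt
    (hs.mem_nhds hx)).hasDerivAt

theorem eventually_span_range_eq_top {𝕜 X E ι : Type*} [NontriviallyNormedField 𝕜]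
    [CompleteSpace 𝕜] [TopologicalSpace X] [NormedAddCommGroup E] [NormedSpace 𝕜 E]
    [FiniteDimensional 𝕜 E] {w : ι → X → E} {x₀ : X} (hw : ∀ i, ContinuousAt (w i) x₀)
    (h : span 𝕜 (range fun i => w i x₀) = ⊤) :
    ∀ᶠ x in 𝓝 x₀, span 𝕜 (range fun i => w i x) = ⊤ := by
  obtain ⟨c, hc⟩ := exists_linearIndependent_comp_fin rfl h
  have hcont : ContinuousAt (fun x r => w (c r) x) x₀ := continuousAt_pi.2 fun r => hw (c r)
  filter_upwards [hcont.eventually hc.eventually] with x hx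
  have hspan : span 𝕜 (range fun r => w (c r) x) = ⊤ :=
    eq_top_of_finrank_eq (by rw [finrank_span_eq_card hx, Fintype.card_fin])
  exact eq_top_iff.2 (hspan.ge.trans (span_mono (range_comp_subset_range c (w · x))))

theorem nondegenerate_off_countable_set_general (n l : ℕ)
    (a b x₀ : ℝ) (hx₀ : x₀ ∈ Set.Ioo a b) (f : ℝ → (Fin n → ℝ))
    (hf : ContDiffOn ℝ l f (Set.Ioo a b))
    (hnd : Submodule.span ℝ (Set.range fun i : Fin l =>
      iteratedDerivWithin ((i : ℕ) + 1) f (Set.Ioo a b) x₀) = ⊤) :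
    ∃ ε > 0, Set.Ioo (x₀ - ε) (x₀ + ε) ⊆ Set.Ioo a b ∧
      ∃ S : Set ℝ, S.Countable ∧
        ∀ x ∈ Set.Ioo (x₀ - ε) (x₀ + ε) \ S,
          Submodule.span ℝ (Set.range fun i : Fin n =>
            iteratedDerivWithin ((i : ℕ) + 1) f (Set.Ioo a b) x) = ⊤ := by
  set u : ℕ → ℝ → Fin n → ℝ := fun i => iteratedDerivWithin (i + 1) f (Ioo a b)
  have hs : Ioo a b ∈ 𝓝 x₀ := Ioo_mem_nhds hx₀.1 hx₀.2
  have hcont : ∀ i : Fin l, ContinuousAt (u i) x₀ := fun i =>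
    (hf.continuousOn_iteratedDerivWithin (by exact_mod_cast i.2)
      (uniqueDiffOn_Ioo a b)).continuousAt hs
  obtain ⟨ε, hε, hball⟩ :=
    Metric.eventually_nhds_iff_ball.1 ((eventually_span_range_eq_top hcont hnd).and hs)
  simp only [Real.ball_eq_Ioo] at hball
  refine ⟨ε, hε, fun y hy => (hball y hy).2, _,
    countable_setOf_span_ne_top (N := l) fun k hk y hy =>
      hf.hasDerivAt_iteratedDerivWithin isOpen_Ioo (by exact_mod_cast hk) (hball y hy).2, ?_⟩
  rintro x ⟨hx, hxS⟩
  by_contra h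
  exact hxS ⟨hx, (hball x hx).1, h⟩

theorem nondegenerate_off_countable_set (n l : ℕ) (hn : 1 ≤ n) (hl : n ≤ l)
    (a b x₀ : ℝ) (hx₀ : x₀ ∈ Set.Ioo a b) (f : ℝ → (Fin n → ℝ))
    (hf : ContDiffOn ℝ l f (Set.Ioo a b))
    (hnd : Submodule.span ℝ (Set.range fun i : Fin l =>
      iteratedDerivWithin ((i : ℕ) + 1) f (Set.Ioo a b) x₀) = ⊤) :
    ∃ ε > 0, Set.Ioo (x₀ - ε) (x₀ + ε) ⊆ Set.Ioo a b ∧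
      ∃ S : Set ℝ, S.Countable ∧
        ∀ x ∈ Set.Ioo (x₀ - ε) (x₀ + ε) \ S,
          Submodule.span ℝ (Set.range fun i : Fin n =>
            iteratedDerivWithin ((i : ℕ) + 1) f (Set.Ioo a b) x) = ⊤ :=
  nondegenerate_off_countable_set_general n l a b x₀ hx₀ f hf hnd
end

section
/- Let y ∈ ℝ^n, Θ ∈ ℝ^{m×d} with n = d + m, 0 < ε < 1, t > 0, φ = (ε^n e^t)^{1/(n+1)}, g_t = diag(φε^{-1},…,φε^{-1},φe^{-t}), U(y) the unipotent matrix [[I_n, σ_n^{-1}y^T],[0,1]], and Z(Θ) as above. Suppose (p, q) ∈ ℤ^n × ℤ with 0 < q < e^t and ‖y − p/q‖_∞ < ε/e^t. Then ‖g_t Z(Θ) U(y) (−pσ_n, q)^T‖ ≤ c₀ φ, where c₀ = √(n+1) · max_{1≤i≤m}(1 + |θ_{i,1}| + ⋯ + |θ_{i,d}|) and ‖·‖ is the Euclidean norm on ℝ^{n+1}. -/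
/-- The unipotent matrix `U(y)` with last column `(y_n, …, y_1, 1)ᵀ`. -/
def Umat (n : ℕ) (y : Fin n → ℝ) : Matrix (Fin (n + 1)) (Fin (n + 1)) ℝ :=
  fun i j =>
    if i = j then 1
    else if h : (j : ℕ) = n ∧ (i : ℕ) < n then y ⟨n - 1 - (i : ℕ), by omega⟩
    else 0

/-- The unipotent block matrix `Z(Θ) = [[I_m, σ_m⁻¹ Θ σ_d, 0], [0, I_d, 0], [0, 0, 1]]`. -/
def Zmat (d m : ℕ) (Θ : Matrix (Fin m) (Fin d) ℝ) :
    Matrix (Fin (d + m + 1)) (Fin (d + m + 1)) ℝ :=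
  fun i j =>
    if i = j then 1
    else if h : (i : ℕ) < m ∧ m ≤ (j : ℕ) ∧ (j : ℕ) < d + m then
      Θ ⟨m - 1 - (i : ℕ), by omega⟩ ⟨d - 1 - ((j : ℕ) - m), by omega⟩
    else 0

/-- `φ = (εⁿ eᵗ)^{1/(n+1)}`. -/
noncomputable def phiQ (n : ℕ) (ε t : ℝ) : ℝ :=
  (ε ^ n * Real.exp t) ^ ((1 : ℝ) / (n + 1))

/-- The diagonal matrix `g_t = diag(φε⁻¹, …, φε⁻¹, φe^{-t})`. -/
noncomputable def gmat (n : ℕ) (ε t : ℝ) : Matrix (Fin (n + 1)) (Fin (n + 1)) ℝ :=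
  Matrix.diagonal fun i =>
    if (i : ℕ) < n then phiQ n ε t / ε else phiQ n ε t * Real.exp (-t)

/-- The Euclidean norm on `Fin k → ℝ`. -/
noncomputable def euclNorm {k : ℕ} (v : Fin k → ℝ) : ℝ :=
  Real.sqrt (∑ i, v i ^ 2)

/-- The integer vector `(−pσ_n, q)ᵀ`: first `n` entries are `−p` in reversed order,
last entry is `q` (here `n = d + m`). -/
def pqVec (n : ℕ) (p : Fin n → ℤ) (q : ℤ) : Fin (n + 1) → ℝ :=
  fun k => if h : (k : ℕ) < n then -(p ⟨n - 1 - (k : ℕ), by omega⟩ : ℝ) else (q : ℝ)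


/-!
Since `g_t` is scalar on the first `n` coordinates, which is where `Z(Θ)` differs from the
identity, `g_t Z(Θ) = Z(Θ) g_t`. The first `n` coordinates of `U(y)(−pσ_n, q)ᵀ` are
`q y_i − p_i = q (y_i − p_i/q)`, of size `< q ε e^{-t} < ε`, and the last one is `q < eᵗ`; so
`g_t U(y)(−pσ_n, q)ᵀ` has sup norm at most `φ`. Applying `Z(Θ)` multiplies the sup norm by at
most its maximal absolute row sum `max_i (1 + Σ_j |θ_{ij}|)`, and the Euclidean norm on
`ℝ^{n+1}` is at most `√(n+1)` times the sup norm.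
-/

open Matrix

attribute [local instance] Matrix.linftyOpNormedAddCommGroup

section Umat
variable {n : ℕ} (y : Fin n → ℝ)

@[simp] lemma Umat_castSucc_castSucc (i j : Fin n) :
    Umat n y i.castSucc j.castSucc = (1 : Matrix (Fin n) (Fin n) ℝ) i j := by
  simp [Umat, Matrix.one_apply, Fin.ext_iff, j.isLt.ne]

@[simp] lemma Umat_castSucc_last (i : Fin n) : Umat n y i.castSucc (Fin.last n) = y i.rev := by
  simp only [Umat, (Fin.castSucc_lt_last i).ne, if_false, Fin.val_last, Fin.val_castSucc, i.isLt,
    and_self, dif_pos]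
  congr 1; ext; simp [Fin.val_rev]; omega

@[simp] lemma Umat_last_castSucc (j : Fin n) : Umat n y (Fin.last n) j.castSucc = 0 := by
  simp [Umat, (Fin.castSucc_lt_last j).ne']

@[simp] lemma Umat_last_last : Umat n y (Fin.last n) (Fin.last n) = 1 := by
  simp [Umat]

lemma Umat_mulVec_castSucc (v : Fin (n + 1) → ℝ) (i : Fin n) :
    (Umat n y *ᵥ v) i.castSucc = v i.castSucc + y i.rev * v (Fin.last n) := by
  simp [mulVec, dotProduct, Fin.sum_univ_castSucc, Matrix.one_apply]

lemma Umat_mulVec_last (v : Fin (n + 1) → ℝ) : (Umat n y *ᵥ v) (Fin.last n) = v (Fin.last n) := by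
  simp [mulVec, dotProduct, Fin.sum_univ_castSucc]

end Umat

@[simp] lemma pqVec_castSucc {n : ℕ} (p : Fin n → ℤ) (q : ℤ) (i : Fin n) :
    pqVec n p q i.castSucc = -(p i.rev : ℝ) := by
  simp only [pqVec, Fin.val_castSucc, i.isLt, dif_pos]
  congr 3; ext; simp [Fin.val_rev]; omega

@[simp] lemma pqVec_last {n : ℕ} (p : Fin n → ℤ) (q : ℤ) : pqVec n p q (Fin.last n) = q := by
  simp [pqVec]

lemma gmat_mulVec_castSucc {n : ℕ} (ε t : ℝ) (v : Fin (n + 1) → ℝ) (i : Fin n) :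
    (gmat n ε t *ᵥ v) i.castSucc = phiQ n ε t / ε * v i.castSucc := by
  simp [gmat, mulVec_diagonal]

lemma gmat_mulVec_last {n : ℕ} (ε t : ℝ) (v : Fin (n + 1) → ℝ) :
    (gmat n ε t *ᵥ v) (Fin.last n) = phiQ n ε t * Real.exp (-t) * v (Fin.last n) := by
  simp [gmat, mulVec_diagonal]

lemma gmat_mul_Zmat_comm (d m : ℕ) (ε t : ℝ) (Θ : Matrix (Fin m) (Fin d) ℝ) :
    gmat (d + m) ε t * Zmat d m Θ = Zmat d m Θ * gmat (d + m) ε t := by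
  ext i j
  simp only [gmat, diagonal_mul, mul_diagonal, Zmat]
  split_ifs <;> first | rfl | omega | ring

lemma norm_le_of_forall_row_sum_le {ι κ : Type*} [Fintype ι] [Fintype κ] {A : Matrix ι κ ℝ}
    {C : ℝ} (hC : 0 ≤ C) (h : ∀ i, ∑ j, |A i j| ≤ C) : ‖A‖ ≤ C := by
  lift C to NNReal using hC
  rw [linfty_opNorm_def, NNReal.coe_le_coe]
  refine Finset.sup_le fun i _ => ?_
  rw [← NNReal.coe_le_coe, NNReal.coe_sum]
  simpa using h i

lemma euclNorm_le_sqrt_mul_norm {k : ℕ} (v : Fin k → ℝ) : euclNorm v ≤ Real.sqrt k * ‖v‖ := by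
  rw [euclNorm, ← Real.sqrt_sq (norm_nonneg v), ← Real.sqrt_mul (Nat.cast_nonneg k)]
  gcongr
  calc ∑ i, v i ^ 2 ≤ ∑ _i : Fin k, ‖v‖ ^ 2 := by
        refine Finset.sum_le_sum fun i _ => ?_
        simpa only [Real.norm_eq_abs, sq_abs] using
          pow_le_pow_left₀ (norm_nonneg _) (norm_le_pi_norm v i) 2
    _ = k * ‖v‖ ^ 2 := by simp

lemma sum_dite_reflect_block (d m : ℕ) (f : Fin d → ℝ) :
    ∑ j : Fin (d + m + 1), (if h : m ≤ (j : ℕ) ∧ (j : ℕ) < d + m then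
      f ⟨d - 1 - ((j : ℕ) - m), by omega⟩ else 0) = ∑ k, f k := by
  symm
  refine Finset.sum_of_injOn (fun k => ⟨m + (d - 1 - k), by omega⟩) ?_ (by simp) ?_ ?_
  · intro a _ b _ hab
    simp only [Fin.mk.injEq] at hab
    omega
  · intro j _ hj
    rw [dif_neg]
    rintro ⟨hmj, hjd⟩
    exact hj ⟨⟨d - 1 - (j - m), by omega⟩, by simp, by ext; simp; omega⟩
  · intro k _
    dsimp only
    rw [dif_pos (by omega)]
    congr 1; ext; dsimp only; omega

lemma sum_abs_Zmat_le {d m : ℕ} {Θ : Matrix (Fin m) (Fin d) ℝ} {C : ℝ} (hC : 1 ≤ C)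
    (hΘ : ∀ r, 1 + ∑ k, |Θ r k| ≤ C) (i : Fin (d + m + 1)) : ∑ j, |Zmat d m Θ i j| ≤ C := by
  by_cases hi : (i : ℕ) < m
  · have hrow : ∀ j, |Zmat d m Θ i j| = (if i = j then 1 else 0) +
        if h : m ≤ (j : ℕ) ∧ (j : ℕ) < d + m then
          |Θ ⟨m - 1 - i, by omega⟩ ⟨d - 1 - ((j : ℕ) - m), by omega⟩| else 0 := by
      intro j
      simp only [Zmat]
      split_ifs <;> subst_vars <;> first | omega | simp
    simp only [hrow, Finset.sum_add_distrib, Finset.sum_ite_eq, Finset.mem_univ, if_true,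
      sum_dite_reflect_block d m (fun k => |Θ ⟨m - 1 - i, by omega⟩ k|)]
    exact hΘ _
  · have hrow : ∀ j, |Zmat d m Θ i j| = if i = j then 1 else 0 := by
      intro j
      simp only [Zmat]
      split_ifs <;> subst_vars <;> first | omega | simp
    simpa [hrow] using hC

lemma abs_mul_sub_lt_of_abs_sub_div_lt {q T ε x y : ℝ} (hq : 0 < q) (hqT : q < T)
    (h : |y - x / q| < ε / T) : |q * y - x| < ε := by
  have hT : 0 < T := hq.trans hqT
  calc |q * y - x| = q * |y - x / q| := by
        rw [← abs_of_pos hq, ← abs_mul, abs_of_pos hq, mul_sub, mul_div_cancel₀ x hq.ne']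
    _ < q * (ε / T) := mul_lt_mul_of_pos_left h hq
    _ ≤ T * (ε / T) := by gcongr; exact (abs_nonneg _).trans h.le
    _ = ε := mul_div_cancel₀ ε hT.ne'

lemma norm_gmat_mulVec_Umat_mulVec_pqVec_le {n : ℕ} {y : Fin n → ℝ} {ε t : ℝ} {p : Fin n → ℤ}
    {q : ℤ} (hε : 0 < ε) (hq0 : 0 < q) (hq : (q : ℝ) < Real.exp t)
    (happ : ∀ i, |y i - (p i : ℝ) / (q : ℝ)| < ε / Real.exp t) :
    ‖gmat n ε t *ᵥ (Umat n y *ᵥ pqVec n p q)‖ ≤ phiQ n ε t := by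
  have hφ : 0 < phiQ n ε t := Real.rpow_pos_of_pos (by positivity) _
  have hq0' : (0 : ℝ) < q := by exact_mod_cast hq0
  refine (pi_norm_le_iff_of_nonneg hφ.le).2 fun i => ?_
  induction i using Fin.lastCases with
  | last =>
    rw [gmat_mulVec_last, Umat_mulVec_last, pqVec_last, Real.norm_eq_abs,
      abs_of_pos (by positivity), mul_assoc]
    have : Real.exp (-t) * q ≤ 1 := by
      rw [Real.exp_neg]; exact inv_mul_le_one_of_le₀ hq.le (Real.exp_pos t).le
    exact mul_le_of_le_one_right hφ.le this
  | cast i =>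
    rw [gmat_mulVec_castSucc, Umat_mulVec_castSucc, pqVec_castSucc, pqVec_last, Real.norm_eq_abs,
      abs_mul, abs_of_pos (by positivity), neg_add_eq_sub, mul_comm (y i.rev)]
    calc phiQ n ε t / ε * |q * y i.rev - p i.rev| ≤ phiQ n ε t / ε * ε := by
          gcongr; exact (abs_mul_sub_lt_of_abs_sub_div_lt hq0' hq (happ i.rev)).le
      _ = phiQ n ε t := div_mul_cancel₀ _ hε.ne'

theorem norm_gt_Z_U_pq_general (d m : ℕ) (hm : 0 < m)
    (y : Fin (d + m) → ℝ) (Θ : Matrix (Fin m) (Fin d) ℝ) (ε t : ℝ)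
    (hε0 : 0 < ε)
    (p : Fin (d + m) → ℤ) (q : ℤ) (hq0 : 0 < q) (hq : (q : ℝ) < Real.exp t)
    (happ : ∀ i, |y i - (p i : ℝ) / (q : ℝ)| < ε / Real.exp t) :
    euclNorm ((gmat (d + m) ε t * Zmat d m Θ * Umat (d + m) y).mulVec
        (pqVec (d + m) p q)) ≤
      (Real.sqrt ((d : ℝ) + m + 1) *
        Finset.univ.sup' ⟨(⟨0, hm⟩ : Fin m), Finset.mem_univ _⟩
          (fun i : Fin m => 1 + ∑ j, |Θ i j|)) * phiQ (d + m) ε t := by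
  set M := Finset.univ.sup' ⟨(⟨0, hm⟩ : Fin m), Finset.mem_univ _⟩
    (fun i : Fin m => 1 + ∑ j, |Θ i j|)
  have hrow (r : Fin m) : 1 + ∑ j, |Θ r j| ≤ M :=
    Finset.le_sup' (fun i => 1 + ∑ j, |Θ i j|) (Finset.mem_univ r)
  have hM : 1 ≤ M := (le_add_of_nonneg_right (by positivity)).trans (hrow ⟨0, hm⟩)
  have hZ : ‖Zmat d m Θ‖ ≤ M := norm_le_of_forall_row_sum_le (by linarith) (sum_abs_Zmat_le hM hrow)
  have hgUv := norm_gmat_mulVec_Umat_mulVec_pqVec_le (y := y) (t := t) hε0 hq0 hq happ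
  rw [gmat_mul_Zmat_comm, Matrix.mul_assoc, ← mulVec_mulVec, ← mulVec_mulVec]
  calc _ ≤ Real.sqrt ↑(d + m + 1) *
        ‖Zmat d m Θ *ᵥ (gmat (d + m) ε t *ᵥ (Umat (d + m) y *ᵥ pqVec (d + m) p q))‖ :=
        euclNorm_le_sqrt_mul_norm _
    _ ≤ Real.sqrt ↑(d + m + 1) * (M * phiQ (d + m) ε t) := by
        gcongr
        exact (linfty_opNorm_mulVec _ _).trans (mul_le_mul hZ hgUv (norm_nonneg _) (by linarith))
    _ = _ := by push_cast; ring

theorem norm_gt_Z_U_pq (d m : ℕ) (hd : 0 < d) (hm : 0 < m)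
    (y : Fin (d + m) → ℝ) (Θ : Matrix (Fin m) (Fin d) ℝ) (ε t : ℝ)
    (hε0 : 0 < ε) (hε1 : ε < 1) (ht : 0 < t)
    (p : Fin (d + m) → ℤ) (q : ℤ) (hq0 : 0 < q) (hq : (q : ℝ) < Real.exp t)
    (happ : ∀ i, |y i - (p i : ℝ) / (q : ℝ)| < ε / Real.exp t) :
    euclNorm ((gmat (d + m) ε t * Zmat d m Θ * Umat (d + m) y).mulVec
        (pqVec (d + m) p q)) ≤
      (Real.sqrt ((d : ℝ) + m + 1) *
        Finset.univ.sup' ⟨(⟨0, hm⟩ : Fin m), Finset.mem_univ _⟩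
          (fun i : Fin m => 1 + ∑ j, |Θ i j|)) * phiQ (d + m) ε t :=
  norm_gt_Z_U_pq_general d m hm y Θ ε t hε0 p q hq0 hq happ
end
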